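/- arXiv:cs/0412042 — 4 statements merged into one kernel-verified Lean document; each statement's English description precedes it below -/
import Mathlib

section
/- Let D be a set with a linear order and let a = (a₁,a₂), b = (b₁,b₂) ∈ D². Each of the following binary predicates is supermodular with respect to the given order: f_a(x,y) = 1 iff x ≤ a₁ and y ≤ a₂; f^b(x,y) = 1 iff x ≥ b₁ and y ≥ b₂; f_a^b(x,y) = 1 iff (x ≤ a₁ and y ≤ a₂) or (x ≥ b₁ and y ≥ b₂) (and each predicate is 0 otherwise). -/
/-- A binary function `f : D² → ℕ` is supermodular w.r.t. a linear order. -/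
def Supermodular2 {D : Type*} [LinearOrder D] (f : D → D → ℕ) : Prop :=
  ∀ a₁ a₂ b₁ b₂ : D,
    f a₁ a₂ + f b₁ b₂ ≤ f (min a₁ b₁) (min a₂ b₂) + f (max a₁ b₁) (max a₂ b₂)

set_option maxHeartbeats 2000000 in
/-- The generalized 2-monotone predicates `f_a`, `f^b` and `f_a^b` are
supermodular on any chain. -/
theorem generalized_two_monotone_supermodular {D : Type*} [LinearOrder D]
    (a₁ a₂ b₁ b₂ : D) :
    Supermodular2 (fun x y => if x ≤ a₁ ∧ y ≤ a₂ then 1 else 0) ∧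
    Supermodular2 (fun x y => if b₁ ≤ x ∧ b₂ ≤ y then 1 else 0) ∧
    Supermodular2 (fun x y =>
      if (x ≤ a₁ ∧ y ≤ a₂) ∨ (b₁ ≤ x ∧ b₂ ≤ y) then 1 else 0) := by
  refine ⟨?_, ?_, ?_⟩ <;> intro x₁ x₂ y₁ y₂ <;>
    simp only [min_le_iff, le_min_iff, le_max_iff, max_le_iff] <;>
    split_ifs <;> first | rfl | omega | (exfalso; tauto)
end

section
/- Let D be a three-element set and let f : D^n → ℕ be a predicate (taking only values 0 and 1) that is irreflexive, meaning f(d,d,…,d) = 0 for every d ∈ D, and nontrivial, meaning f(a) = 1 for some a ∈ D^n. Then f is not supermodular with respect to any linear order on D. -/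
/-- On a three-element set `D`, a nontrivial irreflexive predicate
`f : D^n → ℕ` (taking only the values 0 and 1) is not supermodular with
respect to any linear order on `D`. -/
theorem irreflexive_nontrivial_predicate_not_supermodular
    (D : Type*) (hD : Nat.card D = 3) {n : ℕ} (f : (Fin n → D) → ℕ)
    (hpred : ∀ x, f x = 0 ∨ f x = 1)
    (hirr : ∀ d : D, f (fun _ => d) = 0)
    (hnontriv : ∃ a, f a = 1) :
    ∀ L : LinearOrder D,
      ¬ ∀ a b : Fin n → D,
          f a + f b ≤
            f (fun i => L.min (a i) (b i)) + f (fun i => L.max (a i) (b i)) := by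
  intro L hsup
  letI := L
  have hfin : Finite D := Nat.finite_of_card_ne_zero (by omega)
  letI : Fintype D := Fintype.ofFinite D
  have hcard : Fintype.card D = 3 := by rw [← Nat.card_eq_fintype_card, hD]
  let e := (monoEquivOfFin D hcard).symm
  set z := e.symm 0 with hz
  set m := e.symm 1 with hm
  set t := e.symm 2 with ht
  have hzle : ∀ d : D, z ≤ d := by
    intro d
    have : e z ≤ e d := by
      rw [hz, e.apply_symm_apply]
      exact Fin.zero_le _
    exact e.le_iff_le.mp this
  have hlet : ∀ d : D, d ≤ t := by
    intro d
    have : e d ≤ e t := by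
      rw [ht, e.apply_symm_apply]
      exact Fin.le_last _
    exact e.le_iff_le.mp this
  have hmt : m ≤ t := hlet m
  have hzt : z ≠ t := by
    intro h
    have : (0 : Fin 3) = 2 := by
      rw [hz, ht] at h
      exact e.symm.injective h
    exact absurd this (by decide)
  have hmnez : m ≠ z := by
    intro h
    have : (1 : Fin 3) = 0 := by
      rw [hz, hm] at h
      exact e.symm.injective h
    exact absurd this (by decide)
  have htri : ∀ d : D, d = z ∨ d = m ∨ d = t := by
    intro d
    have hv : e d = 0 ∨ e d = 1 ∨ e d = 2 := by omega
    rcases hv with h | h | h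
    · left; rw [hz, ← h, e.symm_apply_apply]
    · right; left; rw [hm, ← h, e.symm_apply_apply]
    · right; right; rw [ht, ← h, e.symm_apply_apply]
  obtain ⟨a, ha⟩ := hnontriv
  set b : Fin n → D := fun i => if a i = z then t else z with hb
  have hmeet1 : (fun i => L.min (a i) (b i)) = (fun _ => z) := by
    funext i
    show min (a i) (b i) = z
    by_cases h : a i = z
    · simp [hb, h, min_eq_left (hzle t)]
    · simp [hb, h, min_eq_right (hzle (a i))]
  set a' : Fin n → D := fun i => L.max (a i) (b i) with ha'
  have hjoin1 : ∀ i, a' i ≠ z := by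
    intro i
    show max (a i) (b i) ≠ z
    by_cases h : a i = z
    · simp [hb, h, max_eq_right (hzle t)]
      exact fun hc => hzt hc.symm
    · simp [hb, h, max_eq_left (hzle (a i))]
  have h1 := hsup a b
  rw [hmeet1, hirr z, ha] at h1
  have hfa' : f a' = 1 := by
    rcases hpred a' with h | h
    · rw [← ha'] at h1; omega
    · exact h
  set b' : Fin n → D := fun i => if a' i = t then m else t with hb'
  have hmeet2 : (fun i => L.min (a' i) (b' i)) = (fun _ => m) := by
    funext i
    show min (a' i) (b' i) = m
    by_cases h : a' i = t
    · simp [hb', h, min_eq_right hmt]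
    · have : a' i = m := by
        rcases htri (a' i) with h' | h' | h'
        · exact absurd h' (hjoin1 i)
        · exact h'
        · exact absurd h' h
      simp only [hb', if_neg h, this]
      exact min_eq_left hmt
  have hjoin2 : (fun i => L.max (a' i) (b' i)) = (fun _ => t) := by
    funext i
    show max (a' i) (b' i) = t
    by_cases h : a' i = t
    · simp [hb', h, max_eq_left hmt]
    · simp [hb', h, max_eq_right (hlet (a' i))]
  have h2 := hsup a' b'
  rw [hmeet2, hjoin2, hirr m, hirr t, hfa'] at h2
  omega
end

section
/- Let D be a set with a linear order, let n ≥ 2, and let f : D^n → ℕ be a predicate (taking only values 0 and 1). Then f is supermodular with respect to the given order if and only if for every pair of distinct indices i ≠ j in {1,…,n} and every tuple c ∈ D^n, the binary predicate g : D² → ℕ defined by g(x,y) = f(c'), where c' agrees with c except that its i-th coordinate is x and its j-th coordinate is y, is supermodular with respect to the given order. -/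
open Function

private lemma incr_diff {D : Type*} [LinearOrder D] {n : ℕ}
    (f : (Fin n → D) → ℕ)
    (hA : ∀ i j : Fin n, i ≠ j → ∀ c : Fin n → D, ∀ x x' y y' : D, x ≤ x' → y ≤ y' →
      f (update (update c i x) j y') + f (update (update c i x') j y) ≤
        f (update (update c i x) j y) + f (update (update c i x') j y')) :
    ∀ k : ℕ, ∀ v w : Fin n → D, (∀ i, v i ≤ w i) →
      (Finset.univ.filter (fun i => v i < w i)).card = k →
      ∀ j : Fin n, v j = w j → ∀ x y : D, x ≤ y →
      f (update v j y) + f (update w j x) ≤ f (update v j x) + f (update w j y) := by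
  intro k
  induction k with
  | zero =>
    intro v w hle hcard j hj x y hxy
    have hvw : v = w := by
      funext i
      have : i ∉ Finset.univ.filter (fun i => v i < w i) := by
        rw [Finset.card_eq_zero.mp hcard]; exact Finset.notMem_empty i
      simp only [Finset.mem_filter, Finset.mem_univ, true_and, not_lt] at this
      exact le_antisymm (hle i) this
    rw [hvw, Nat.add_comm]
  | succ k ih =>
    intro v w hle hcard j hj x y hxy
    have hne : (Finset.univ.filter (fun i => v i < w i)).Nonempty := by
      rw [← Finset.card_pos, hcard]; omega
    obtain ⟨i, hi⟩ := hne
    simp only [Finset.mem_filter, Finset.mem_univ, true_and] at hi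
    have hij : i ≠ j := fun h => absurd (h ▸ hj) (ne_of_lt hi)
    set w' := update w i (v i) with hw'
    have hle' : ∀ m, v m ≤ w' m := by
      intro m
      rcases eq_or_ne m i with rfl | hmi
      · simp [hw']
      · simp [hw', update_of_ne hmi]; exact hle m
    have hset : Finset.univ.filter (fun m => v m < w' m) =
        (Finset.univ.filter (fun m => v m < w m)).erase i := by
      ext m
      simp only [Finset.mem_filter, Finset.mem_univ, true_and, Finset.mem_erase]
      rcases eq_or_ne m i with rfl | hmi
      · simp [hw']
      · simp [hw', update_of_ne hmi, hmi]
    have hcard' : (Finset.univ.filter (fun m => v m < w' m)).card = k := by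
      rw [hset, Finset.card_erase_of_mem (by simp [hi]), hcard]; omega
    have h1 := ih v w' hle' hcard' j (by
      rw [hw', update_of_ne (Ne.symm hij)]; exact hj) x y hxy
    have h2 := hA i j hij w (v i) (w i) x y (hle i) hxy
    rw [update_eq_self] at h2
    rw [← hw'] at h2
    omega

/-- An `n`-ary predicate (`n ≥ 2`) on a chain is supermodular iff every binary
predicate obtained from it by fixing all but two of its coordinates to
constants is supermodular. -/
theorem supermodular_iff_all_binary_restrictions_supermodular
    {D : Type*} [LinearOrder D] {n : ℕ} (hn : 2 ≤ n)
    (f : (Fin n → D) → ℕ) (hpred : ∀ x, f x = 0 ∨ f x = 1) :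
    (∀ a b : Fin n → D,
        f a + f b ≤
          f (fun i => min (a i) (b i)) + f (fun i => max (a i) (b i))) ↔
    (∀ i j : Fin n, i ≠ j → ∀ c : Fin n → D,
      ∀ x₁ x₂ y₁ y₂ : D,
        (fun x y => f (Function.update (Function.update c i x) j y)) x₁ y₁ +
          (fun x y => f (Function.update (Function.update c i x) j y)) x₂ y₂ ≤
        (fun x y => f (Function.update (Function.update c i x) j y))
            (min x₁ x₂) (min y₁ y₂) +
          (fun x y => f (Function.update (Function.update c i x) j y))
            (max x₁ x₂) (max y₁ y₂)) := by
  constructor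
  · -- forward
    intro H i j hij c x₁ x₂ y₁ y₂
    simp only
    have := H (update (update c i x₁) j y₁) (update (update c i x₂) j y₂)
    have e1 : (fun m => min (update (update c i x₁) j y₁ m) (update (update c i x₂) j y₂ m)) =
        update (update c i (min x₁ x₂)) j (min y₁ y₂) := by
      funext m
      rcases eq_or_ne m j with rfl | hmj
      · simp
      · rcases eq_or_ne m i with rfl | hmi
        · simp [update_of_ne hmj, update_self]
        · simp [update_of_ne hmj, update_of_ne hmi]
    have e2 : (fun m => max (update (update c i x₁) j y₁ m) (update (update c i x₂) j y₂ m)) =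
        update (update c i (max x₁ x₂)) j (max y₁ y₂) := by
      funext m
      rcases eq_or_ne m j with rfl | hmj
      · simp
      · rcases eq_or_ne m i with rfl | hmi
        · simp [update_of_ne hmj, update_self]
        · simp [update_of_ne hmj, update_of_ne hmi]
    rw [e1, e2] at this
    exact this
  · -- backward
    intro H
    have hA : ∀ i j : Fin n, i ≠ j → ∀ c : Fin n → D, ∀ x x' y y' : D, x ≤ x' → y ≤ y' →
        f (update (update c i x) j y') + f (update (update c i x') j y) ≤
          f (update (update c i x) j y) + f (update (update c i x') j y') := by
      intro i j hij c x x' y y' hx hy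
      have := H i j hij c x x' y' y
      simp only [min_eq_left hx, max_eq_right hx, min_eq_right hy, max_eq_left hy] at this
      exact this
    suffices hmain : ∀ k : ℕ, ∀ a b : Fin n → D,
        (Finset.univ.filter (fun i => a i < b i)).card = k →
        f a + f b ≤ f (fun i => min (a i) (b i)) + f (fun i => max (a i) (b i)) by
      intro a b; exact hmain _ a b rfl
    intro k
    induction k with
    | zero =>
      intro a b hcard
      have hle : ∀ i, b i ≤ a i := by
        intro i
        have : i ∉ Finset.univ.filter (fun i => a i < b i) := by
          rw [Finset.card_eq_zero.mp hcard]; exact Finset.notMem_empty i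
        simp only [Finset.mem_filter, Finset.mem_univ, true_and, not_lt] at this
        exact this
      have e1 : (fun i => min (a i) (b i)) = b := funext fun i => min_eq_right (hle i)
      have e2 : (fun i => max (a i) (b i)) = a := funext fun i => max_eq_left (hle i)
      rw [e1, e2, Nat.add_comm]
    | succ k ih =>
      intro a b hcard
      have hne : (Finset.univ.filter (fun i => a i < b i)).Nonempty := by
        rw [← Finset.card_pos, hcard]; omega
      obtain ⟨j, hj⟩ := hne
      simp only [Finset.mem_filter, Finset.mem_univ, true_and] at hj
      set b' := update b j (a j) with hb'
      have hset : Finset.univ.filter (fun m => a m < b' m) =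
          (Finset.univ.filter (fun m => a m < b m)).erase j := by
        ext m
        simp only [Finset.mem_filter, Finset.mem_univ, true_and, Finset.mem_erase]
        rcases eq_or_ne m j with rfl | hmj
        · simp [hb']
        · simp [hb', update_of_ne hmj, hmj]
      have hcard' : (Finset.univ.filter (fun m => a m < b' m)).card = k := by
        rw [hset, Finset.card_erase_of_mem (by simp [hj]), hcard]; omega
      have h1 := ih a b' hcard'
      have e1 : (fun i => min (a i) (b' i)) = (fun i => min (a i) (b i)) := by
        funext m
        rcases eq_or_ne m j with rfl | hmj
        · simp [hb', min_eq_left hj.le]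
        · simp [hb', update_of_ne hmj]
      have e2 : (fun i => max (a i) (b' i)) = update (fun i => max (a i) (b i)) j (a j) := by
        funext m
        rcases eq_or_ne m j with rfl | hmj
        · simp [hb']
        · simp [hb', update_of_ne hmj]
      rw [e1, e2] at h1
      -- now the increasing differences step
      have hvw : ∀ m, b' m ≤ update (fun i => max (a i) (b i)) j (a j) m := by
        intro m
        rcases eq_or_ne m j with rfl | hmj
        · simp [hb']
        · simp [hb', update_of_ne hmj]
      have hB := incr_diff f hA _ b' (update (fun i => max (a i) (b i)) j (a j)) hvw rfl j
        (by simp [hb']) (a j) (b j) hj.le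
      rw [hb'] at hB
      simp only [update_idem, update_eq_self] at hB
      rw [show update b j (a j) = b' from rfl] at hB
      have eb : update (fun i => max (a i) (b i)) j (b j) = fun i => max (a i) (b i) := by
        have : max (a j) (b j) = b j := max_eq_right hj.le
        conv_rhs => rw [← update_eq_self j (fun i => max (a i) (b i))]
        simp [this]
      rw [eb] at hB
      omega
end

section
/- Let D be a set with a linear order, let g : D² → ℕ be a binary predicate (taking only values 0 and 1), and let a ∈ D be such that g(x,a) = 1 for all x ∈ D. Define g' : D² → ℕ by g'(x,y) = 0 if y = a and g'(x,y) = g(x,y) otherwise. Then g is supermodular with respect to the given order if and only if g' is supermodular with respect to the given order. -/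
/-- If `g` is a binary 0/1-predicate on a chain `D` with an all-one column at
`a` (i.e. `g x a = 1` for all `x`), and `g'` is obtained from `g` by replacing
this column with an all-zero column, then `g` is supermodular iff `g'` is. -/
theorem all_one_column_supermodular_iff
    {D : Type*} [LinearOrder D] (g : D → D → ℕ)
    (hpred : ∀ x y, g x y = 0 ∨ g x y = 1)
    (a : D) (ha : ∀ x : D, g x a = 1) :
    (∀ a₁ a₂ b₁ b₂ : D,
        g a₁ a₂ + g b₁ b₂ ≤
          g (min a₁ b₁) (min a₂ b₂) + g (max a₁ b₁) (max a₂ b₂)) ↔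
    (∀ a₁ a₂ b₁ b₂ : D,
        (fun x y => if y = a then 0 else g x y) a₁ a₂ +
            (fun x y => if y = a then 0 else g x y) b₁ b₂ ≤
          (fun x y => if y = a then 0 else g x y) (min a₁ b₁) (min a₂ b₂) +
            (fun x y => if y = a then 0 else g x y) (max a₁ b₁) (max a₂ b₂)) := by
  have hsplit : ∀ x y, g x y = (if y = a then 0 else g x y) + (if y = a then 1 else 0) := by
    intro x y
    by_cases h : y = a
    · subst h; simp [ha]
    · simp [h]
  have hind : ∀ a₂ b₂ : D,
      (if min a₂ b₂ = a then (1:ℕ) else 0) + (if max a₂ b₂ = a then 1 else 0) =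
      (if a₂ = a then 1 else 0) + (if b₂ = a then 1 else 0) := by
    intro a₂ b₂
    rcases le_total a₂ b₂ with h | h
    · rw [min_eq_left h, max_eq_right h]
    · rw [min_eq_right h, max_eq_left h, Nat.add_comm]
  constructor
  · intro H a₁ a₂ b₁ b₂
    have key := H a₁ a₂ b₁ b₂
    have h2 := hind a₂ b₂
    rw [hsplit a₁ a₂, hsplit b₁ b₂, hsplit (min a₁ b₁) (min a₂ b₂),
      hsplit (max a₁ b₁) (max a₂ b₂)] at key
    simp only
    omega
  · intro H a₁ a₂ b₁ b₂
    have key := H a₁ a₂ b₁ b₂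
    have h2 := hind a₂ b₂
    simp only at key
    rw [hsplit a₁ a₂, hsplit b₁ b₂, hsplit (min a₁ b₁) (min a₂ b₂),
      hsplit (max a₁ b₁) (max a₂ b₂)]
    omega
end
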